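/- arXiv:1110.6826 — 2 statements merged into one kernel-verified Lean document; each statement's English description precedes it below -/
import Mathlib

section
/- Every proper doubly warped product Finsler manifold (f₂ and f₁ both nonconstant) with vanishing Berwald curvature is Riemannian; i.e., if the Berwald curvature tensor of the doubly warped metric F vanishes identically, then the Cartan torsions of F₁ and F₂ both vanish. -/
/-! The mixed Berwald components are the Cartan torsion of one factor multiplied by
`-1/f²` and by the gradient of the other warping function with its index raised.
Raising an index with the inverse fundamental tensor is injective, so the raised gradient
of a nonconstant warping function is nonzero somewhere, and the torsion must vanish. -/

open Matrix

theorem Matrix.vecMul_ne_zero_of_mul_eq_one {ι R : Type*} [Fintype ι] [DecidableEq ι]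
    [Semiring R] {A B : Matrix ι ι R} (hBA : B * A = 1) {v : ι → R} (hv : v ≠ 0) :
    v ᵥ* B ≠ 0 := by
  intro h
  apply hv
  rw [← vecMul_one v, ← hBA, ← vecMul_vecMul, h, zero_vecMul]

theorem eq_zero_of_forall_mul_mul_eq_zero {ι M₀ : Type*} [MulZeroClass M₀]
    [NoZeroDivisors M₀] {c d : M₀} {a : ι → M₀} (hc : c ≠ 0) (ha : a ≠ 0)
    (h : ∀ k, c * a k * d = 0) : d = 0 := by
  obtain ⟨k, hk⟩ := Function.ne_iff.mp ha
  exact (mul_eq_zero.mp (h k)).resolve_left (mul_ne_zero hc hk)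

/-- Every proper doubly warped product Finsler manifold
(`f₁`, `f₂` both nonconstant) with vanishing Berwald curvature is Riemannian:
the Cartan torsions `C1` of `F₁` and `C2` of `F₂` both vanish.

Points `p : P₁` model points of the slit tangent bundle `TM₁°` (with coordinates
`(x,y)`), and `q : P₂` models points of `TM₂°`.  `df1sq p h = ∂f₁²/∂x^h`,
`df2sq q α = ∂f₂²/∂u^α`; `ginv1`, `ginv2` are the inverse fundamental tensors of
`F₁`, `F₂`.  Vanishing Berwald curvature of the doubly warped metric `F` includes
the vanishing of the mixed components
`𝐁^k_{αβλ} = −(1/f₂²)(∂f₁²/∂x^h) g^{kh} C_{αβλ}` and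
`𝐁^γ_{ijk} = −(1/f₁²)(∂f₂²/∂u^α) g^{αγ} C_{ijk}` (summed over `h` resp. `α`). -/
theorem stmt2 {n₁ n₂ : ℕ} {P₁ P₂ : Type*}
    (f1sq : P₁ → ℝ) (f2sq : P₂ → ℝ)
    (hf1pos : ∀ p, 0 < f1sq p) (hf2pos : ∀ q, 0 < f2sq q)
    (df1sq : P₁ → Fin n₁ → ℝ) (df2sq : P₂ → Fin n₂ → ℝ)
    (g1 ginv1 : P₁ → Fin n₁ → Fin n₁ → ℝ)
    (g2 ginv2 : P₂ → Fin n₂ → Fin n₂ → ℝ)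
    (C1 : P₁ → Fin n₁ → Fin n₁ → Fin n₁ → ℝ)
    (C2 : P₂ → Fin n₂ → Fin n₂ → Fin n₂ → ℝ)
    (hg1 : ∀ p r h, ∑ k, g1 p r k * ginv1 p k h = if r = h then (1:ℝ) else 0)
    (hg2 : ∀ q r h, ∑ γ, g2 q r γ * ginv2 q γ h = if r = h then (1:ℝ) else 0)
    -- proper: both warping functions are nonconstant
    (hf1nc : ∃ p r, df1sq p r ≠ 0) (hf2nc : ∃ q ν, df2sq q ν ≠ 0)
    -- vanishing Berwald curvature of F: the mixed components vanish
    (hB1 : ∀ p q k α β γ,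
      -(1 / f2sq q) * (∑ h, df1sq p h * ginv1 p k h) * C2 q α β γ = 0)
    (hB2 : ∀ p q γ i j k,
      -(1 / f1sq p) * (∑ α, df2sq q α * ginv2 q α γ) * C1 p i j k = 0) :
    (∀ p i j k, C1 p i j k = 0) ∧ (∀ q α β γ, C2 q α β γ = 0) := by
  constructor
  · intro p i j k
    obtain ⟨q, ν, hν⟩ := hf2nc
    have hinv : of (ginv2 q) * of (g2 q) = 1 := mul_eq_one_comm.mp (Matrix.ext (hg2 q))
    exact eq_zero_of_forall_mul_mul_eq_zero (neg_ne_zero.mpr (one_div_pos.mpr (hf1pos p)).ne')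
      (vecMul_ne_zero_of_mul_eq_one hinv (Function.ne_iff.mpr ⟨ν, hν⟩))
      fun γ => hB2 p q γ i j k
  · intro q α β γ
    obtain ⟨p, r, hr⟩ := hf1nc
    -- here the gradient is contracted with the second index of `g^{kh}`, hence the transposes
    have hinv : (of (ginv1 p))ᵀ * (of (g1 p))ᵀ = 1 := by
      rw [← transpose_mul, show of (g1 p) * of (ginv1 p) = 1 from Matrix.ext (hg1 p),
        transpose_one]
    exact eq_zero_of_forall_mul_mul_eq_zero (neg_ne_zero.mpr (one_div_pos.mpr (hf2pos q)).ne')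
      (vecMul_ne_zero_of_mul_eq_one hinv (Function.ne_iff.mpr ⟨r, hr⟩))
      fun k => hB1 p q k α β γ
end

section
/- Every proper doubly warped product Finsler manifold with vanishing Landsberg curvature is Riemannian: if the Landsberg curvature 𝐋 of F vanishes identically and both f₁, f₂ are nonconstant, then C_{ijk} = 0 and C_{αβλ} = 0, i.e., F₁ and F₂ (hence F) are Riemannian. -/
noncomputable def pd {n : ℕ} (f : (Fin n → ℝ) → ℝ) (v : Fin n → ℝ) (k : Fin n) : ℝ :=
  fderiv ℝ f v (Pi.single k 1)

noncomputable def pd2 {n : ℕ} (f : (Fin n → ℝ) → ℝ) (v : Fin n → ℝ) (k l : Fin n) : ℝ :=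
  pd (fun w => pd f w k) v l

noncomputable def pd3 {n : ℕ} (f : (Fin n → ℝ) → ℝ) (v : Fin n → ℝ) (k l m : Fin n) : ℝ :=
  pd (fun w => pd2 f w k l) v m

lemma pd_affine {n : ℕ} (d : Fin n → ℝ) (a c : ℝ) (v : Fin n → ℝ) (k : Fin n) :
    pd (fun w => a + c * ∑ α, w α * d α) v k = c * d k := by
  classical
  set L : (Fin n → ℝ) →L[ℝ] ℝ :=
    ∑ α, d α • ContinuousLinearMap.proj (R := ℝ) (φ := fun _ : Fin n => ℝ) α with hL
  have hLap : ∀ w, L w = ∑ α, w α * d α := by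
    intro w
    simp [hL, ContinuousLinearMap.sum_apply, mul_comm]
  have hder : HasFDerivAt (fun w : Fin n → ℝ => a + c * ∑ α, w α * d α) (c • L) v := by
    have h1 : HasFDerivAt (fun w : Fin n → ℝ => L w) L v := L.hasFDerivAt
    have h2 := (hasFDerivAt_const a v).add (h1.const_mul c)
    have hfun : (fun w : Fin n → ℝ => a + c * ∑ α, w α * d α)
        = fun w => a + c * L w := by funext w; rw [hLap]
    rw [hfun]
    exact (h1.const_mul c).const_add a
  have := hder.fderiv
  simp only [pd, this, ContinuousLinearMap.smul_apply, smul_eq_mul, hLap]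
  rw [Finset.sum_eq_single k]
  · simp
  · intro b _ hb; simp [Pi.single_apply, hb]
  · simp

lemma key {n : ℕ} (F : (Fin n → ℝ) → ℝ) (d : Fin n → ℝ) (a b c : ℝ)
    (ν : Fin n) (hd : d ν ≠ 0)
    (heq : ∀ v, a + b * F v + c * (∑ α, v α * d α) = 0)
    (hpd0 : pd F 0 ν = 0) : c = 0 := by
  classical
  by_cases hb : b = 0
  · have h0 := heq 0
    simp [hb] at h0
    have h1 := heq (Pi.single ν 1)
    rw [Finset.sum_eq_single ν] at h1
    · simp [hb, h0] at h1
      rcases h1 with h | h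
      · exact h
      · exact absurd h hd
    · intro b _ hbν; simp [Pi.single_apply, hbν]
    · simp
  · have hF : F = fun v => (-a / b) + (-(c / b)) * ∑ α, v α * d α := by
      funext v
      have h := heq v
      have hFv : F v = (-a - c * ∑ α, v α * d α) / b := by
        rw [eq_div_iff hb]; linarith
      rw [hFv]; ring
    rw [hF, pd_affine] at hpd0
    have : c / b = 0 := by
      rcases mul_eq_zero.mp hpd0 with h | h
      · linarith [neg_eq_zero.mp h]
      · exact absurd h hd
    field_simp at this
    simpa using this

/-- Every proper doubly warped product Finsler manifold with
vanishing Landsberg curvature is Riemannian: if the Landsberg curvature `𝐋` of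
`F` vanishes identically and both `f₁, f₂` are nonconstant, then `C1 = 0` and
`C2 = 0`, i.e. `F₁` and `F₂` (hence `F`) are Riemannian.

By Lemma 6.1 the pure components of `𝐋` are
`𝐋_{ijk} = f₂² L1_{ijk} + (1/8) f₂² y_l (∂³g^{lh}/∂y^i∂y^j∂y^k)(∂f₁²/∂x^h) F₂²
          + (1/2) C1_{ijk} v^α (∂f₂²/∂u^α)` and its symmetric analogue
`𝐋_{αβλ}`; their vanishing is hypotheses `hL1`, `hL2`. -/
theorem stmt7 {n₁ n₂ : ℕ} {U₁ U₂ : Type*}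
    (F1sq : U₁ → (Fin n₁ → ℝ) → ℝ) (F2sq : U₂ → (Fin n₂ → ℝ) → ℝ)
    (g1 ginv1 : U₁ → (Fin n₁ → ℝ) → Fin n₁ → Fin n₁ → ℝ)
    (g2 ginv2 : U₂ → (Fin n₂ → ℝ) → Fin n₂ → Fin n₂ → ℝ)
    (C1 L1 : U₁ → (Fin n₁ → ℝ) → Fin n₁ → Fin n₁ → Fin n₁ → ℝ)
    (C2 L2 : U₂ → (Fin n₂ → ℝ) → Fin n₂ → Fin n₂ → Fin n₂ → ℝ)
    (f1sq : U₁ → ℝ) (f2sq : U₂ → ℝ)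
    (hf1 : ∀ x, 0 < f1sq x) (hf2 : ∀ u, 0 < f2sq u)
    (df1sq : U₁ → Fin n₁ → ℝ) (df2sq : U₂ → Fin n₂ → ℝ)
    -- proper: both warping functions are nonconstant
    (hf1nc : ∃ x h, df1sq x h ≠ 0) (hf2nc : ∃ u ν, df2sq u ν ≠ 0)
    (hg1inv : ∀ x y i j, ∑ k, g1 x y i k * ginv1 x y k j = if i = j then (1:ℝ) else 0)
    (hg2inv : ∀ u v α β, ∑ γ, g2 u v α γ * ginv2 u v γ β = if α = β then (1:ℝ) else 0)
    -- fiber derivative of F² : ∂F₁²/∂y^i = 2 y_i, ∂F₂²/∂v^β = 2 v_β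
    (hF1der : ∀ x y i, pd (F1sq x) y i = 2 * ∑ j, g1 x y i j * y j)
    (hF2der : ∀ u v β, pd (F2sq u) v β = 2 * ∑ μ, g2 u v β μ * v μ)
    (hsm1 : ∀ x k h, ContDiff ℝ (⊤ : ℕ∞) (fun y => ginv1 x y k h))
    (hsm2 : ∀ u α γ, ContDiff ℝ (⊤ : ℕ∞) (fun v => ginv2 u v α γ))
    -- 𝐋 = 0 : the pure components vanish
    (hL1 : ∀ x y u v i j k,
      f2sq u * L1 x y i j k
      + (1/8) * f2sq u * (∑ h, (∑ l, (∑ m, g1 x y l m * y m)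
          * pd3 (fun w => ginv1 x w l h) y i j k) * df1sq x h) * F2sq u v
      + (1/2) * C1 x y i j k * (∑ α, v α * df2sq u α) = 0)
    (hL2 : ∀ x y u v α β γ,
      f1sq x * L2 u v α β γ
      + (1/8) * f1sq x * (∑ ν, (∑ μ, (∑ s, g2 u v μ s * v s)
          * pd3 (fun w => ginv2 u w μ ν) v α β γ) * df2sq u ν) * F1sq x y
      + (1/2) * C2 u v α β γ * (∑ h, y h * df1sq x h) = 0) :
    (∀ x y i j k, C1 x y i j k = 0) ∧ (∀ u v α β γ, C2 u v α β γ = 0) := by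
  constructor
  · intro x y i j k
    obtain ⟨u, ν, hd⟩ := hf2nc
    have hpd0 : pd (F2sq u) 0 ν = 0 := by
      have h := hF2der u 0 ν
      simpa using h
    have heq : ∀ v, (f2sq u * L1 x y i j k)
        + ((1/8) * f2sq u * (∑ h, (∑ l, (∑ m, g1 x y l m * y m)
            * pd3 (fun w => ginv1 x w l h) y i j k) * df1sq x h)) * F2sq u v
        + ((1/2) * C1 x y i j k) * (∑ α, v α * df2sq u α) = 0 := by
      intro v
      have h := hL1 x y u v i j k
      linear_combination h
    have hc := key (F2sq u) (df2sq u) _ _ _ ν hd heq hpd0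
    linarith
  · intro u v α β γ
    obtain ⟨x, h0, hd⟩ := hf1nc
    have hpd0 : pd (F1sq x) 0 h0 = 0 := by
      have h := hF1der x 0 h0
      simpa using h
    have heq : ∀ y, (f1sq x * L2 u v α β γ)
        + ((1/8) * f1sq x * (∑ ν, (∑ μ, (∑ s, g2 u v μ s * v s)
            * pd3 (fun w => ginv2 u w μ ν) v α β γ) * df2sq u ν)) * F1sq x y
        + ((1/2) * C2 u v α β γ) * (∑ h, y h * df1sq x h) = 0 := by
      intro y
      have h := hL2 x y u v α β γ
      linear_combination h
    have hc := key (F1sq x) (df1sq x) _ _ _ h0 hd heq hpd0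
    linarith
end
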